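/- Let N ≥ 1 be an integer, let f : ℝ → ℂ be a smooth function supported in the open interval (−1/2, 1/2) with f(0) = 1, and let f̂(ξ) = ∫_{−∞}^{∞} f(x)·e^{−2πi·x·ξ} dx. Then for every function ψ : ℤ/Nℤ → ℂ and every Q ∈ ℤ/Nℤ, |ψ(Q)|² ≤ ∑_{n ∈ ℤ} |f̂(n/N)| · |(1/N)·∑_{Q' ∈ ℤ/Nℤ} e^{2πi·n·Q'/N}·|ψ(Q')|²|, where e^{2πi·n·Q'/N} is well defined since it depends only on n·Q' modulo N. -/

import Mathlib

/-- The Fourier transform `f̂(ξ) = ∫ f(x) e^{−2πi x ξ} dx` of `f : ℝ → ℂ`. -/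
noncomputable def fourierT (f : ℝ → ℂ) (ξ : ℝ) : ℂ :=
  ∫ x : ℝ, f x * Complex.exp (-2 * Real.pi * Complex.I * x * ξ)

open MeasureTheory Real Complex FourierTransform SchwartzMap in
/-- A smooth compactly supported function as a Schwartz map. -/
noncomputable def toSchwartz (g : ℝ → ℂ) (hg : ContDiff ℝ (⊤ : ℕ∞) g)
    (hcs : HasCompactSupport g) : SchwartzMap ℝ ℂ where
  toFun := g
  smooth' := hg.of_le (by simp)
  decay' := by
    intro k n
    have h2 : HasCompactSupport (iteratedFDeriv ℝ n g) := hcs.iteratedFDeriv (𝕜 := ℝ) n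
    have h1 : Continuous fun x : ℝ => ‖x‖ ^ k * ‖iteratedFDeriv ℝ n g x‖ :=
      (continuous_norm.pow k).mul (hg.continuous_iteratedFDeriv (by exact_mod_cast le_top)).norm
    have h3 : HasCompactSupport fun x : ℝ => ‖x‖ ^ k * ‖iteratedFDeriv ℝ n g x‖ :=
      (h2.norm).mul_left
    obtain ⟨C, hC⟩ := h1.bounded_above_of_compact_support h3
    exact ⟨C, fun x => (Real.le_norm_self _).trans (hC x)⟩

@[simp] lemma toSchwartz_apply (g : ℝ → ℂ) (hg : ContDiff ℝ (⊤ : ℕ∞) g)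
    (hcs : HasCompactSupport g) (x : ℝ) : toSchwartz g hg hcs x = g x := rfl

open MeasureTheory Real Complex FourierTransform SchwartzMap in
/-- For `f` smooth, supported in `(−1/2, 1/2)`, with `f(0) = 1`, any `ψ : ℤ/Nℤ → ℂ`
and any `Q`,
`|ψ(Q)|² ≤ ∑_{n ∈ ℤ} |f̂(n/N)| · |(1/N) ∑_{Q'} e^{2πi n Q'/N} |ψ(Q')|²|`. -/
theorem intensity_le_sum_matrix_elements (N : ℕ) [NeZero N] (f : ℝ → ℂ)
    (hf : ContDiff ℝ (⊤ : ℕ∞) f)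
    (hsupp : Function.support f ⊆ Set.Ioo (-(1/2) : ℝ) (1/2)) (hf0 : f 0 = 1)
    (ψ : ZMod N → ℂ) (Q : ZMod N) :
    ‖ψ Q‖ ^ 2 ≤
      ∑' n : ℤ, ‖fourierT f ((n : ℝ) / N)‖ *
        ‖(1 / (N : ℂ)) * ∑ Q' : ZMod N,
          Complex.exp (2 * Real.pi * Complex.I * n * (Q'.val : ℂ) / N) *
            (‖ψ Q'‖ : ℂ) ^ 2‖ := by
  classical
  have hNpos : 0 < N := Nat.pos_of_ne_zero (NeZero.ne N)
  have hN : (0:ℝ) < (N:ℝ) := by exact_mod_cast hNpos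
  have hN1 : (1:ℝ) ≤ (N:ℝ) := by exact_mod_cast hNpos
  have hNC : ((N:ℝ):ℂ) ≠ 0 := by exact_mod_cast hN.ne'
  have hNC2 : ((N:ℕ):ℂ) ≠ 0 := Nat.cast_ne_zero.mpr (NeZero.ne N)
  -- f vanishes outside (-1/2, 1/2)
  have hfz : ∀ x : ℝ, x ∉ Set.Ioo (-(1/2) : ℝ) (1/2) → f x = 0 := by
    intro x hx
    by_contra hne
    exact hx (hsupp hne)
  have hfint : ∀ j : ℤ, j ≠ 0 → f (j:ℝ) = 0 := by
    intro j hj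
    apply hfz
    intro hmem
    have h1 : (1:ℝ) ≤ |(j:ℝ)| := by
      rw [← Int.cast_abs]
      exact_mod_cast Int.one_le_abs hj
    rw [Set.mem_Ioo] at hmem
    rw [le_abs] at h1
    rcases h1 with h1 | h1 <;> linarith [hmem.1, hmem.2]
  have hcs : HasCompactSupport f := by
    apply HasCompactSupport.intro (isCompact_Icc (a := -(1/2:ℝ)) (b := (1/2:ℝ)))
    intro x hx
    apply hfz
    intro hmem
    exact hx (Set.Ioo_subset_Icc_self hmem)
  -- the scaled function
  have hfh : ContDiff ℝ (⊤ : ℕ∞) (fun t : ℝ => f (t * N)) :=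
    hf.comp (contDiff_id.mul contDiff_const)
  have hcsh : HasCompactSupport (fun t : ℝ => f (t * N)) := by
    apply HasCompactSupport.intro (isCompact_Icc (a := -(1:ℝ)) (b := (1:ℝ)))
    intro x hx
    apply hfz
    intro hmem
    rw [Set.mem_Ioo] at hmem
    rw [Set.mem_Icc, not_and_or, not_le, not_le] at hx
    apply hx.elim <;> intro h <;> nlinarith
  set H : SchwartzMap ℝ ℂ := toSchwartz _ hfh hcsh with hH
  -- scaling identity for the Fourier transform
  have hFh : ∀ ξ : ℝ, 𝓕 (fun t : ℝ => f (t * N)) ξ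
      = (1/((N:ℝ):ℂ)) * fourierT f (ξ / N) := by
    intro ξ
    rw [Real.fourier_real_eq_integral_exp_smul]
    have h1 := MeasureTheory.Measure.integral_comp_mul_right
        (g := fun u : ℝ => f u * Complex.exp (-2 * π * Complex.I * u * (ξ/N))) (N:ℝ)
    calc (∫ v : ℝ, Complex.exp (↑(-2 * π * v * ξ) * Complex.I) • f (v * N))
        = ∫ x : ℝ, (fun u : ℝ => f u * Complex.exp (-2 * π * Complex.I * u * (ξ/N))) (x * (N:ℝ)) := by
          congr 1
          funext x
          simp only [smul_eq_mul]
          rw [mul_comm]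
          congr 1
          congr 1
          push_cast
          field_simp [hNC2]
      _ = |((N:ℝ))⁻¹| • ∫ u : ℝ, f u * Complex.exp (-2 * π * Complex.I * u * (ξ/N)) := h1
      _ = (1/((N:ℝ):ℂ)) * fourierT f (ξ / N) := by
          rw [fourierT, abs_of_pos (by positivity), Complex.real_smul]
          push_cast
          ring
  -- Poisson summation
  have poisson : ∀ x : ℝ, ∑' m : ℤ, f ((x + m) * N)
      = ∑' n : ℤ, (1/((N:ℝ):ℂ)) * fourierT f ((n:ℝ) / N)
          * Complex.exp (2 * π * Complex.I * n * x) := by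
    intro x
    have hps := SchwartzMap.tsum_eq_tsum_fourier H x
    rw [SchwartzMap.fourier_coe] at hps
    calc ∑' m : ℤ, f ((x + m) * N) = ∑' m : ℤ, H (x + m) := tsum_congr fun m => rfl
      _ = ∑' n : ℤ, 𝓕 (⇑H) n * fourier n (x : UnitAddCircle) := hps
      _ = _ := by
          apply tsum_congr
          intro n
          rw [show 𝓕 (⇑H) = 𝓕 (fun t : ℝ => f (t * N)) from rfl, hFh, fourier_coe_apply]
          norm_num
  -- the delta identity at rational points
  have keyδ : ∀ k : ℤ, (∑' n : ℤ, (1/((N:ℝ):ℂ)) * fourierT f ((n:ℝ)/N)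
      * Complex.exp (2 * π * Complex.I * n * (((k:ℝ)/N : ℝ) : ℂ)))
      = (if (N:ℤ) ∣ k then 1 else 0) := by
    intro k
    rw [← poisson ((k:ℝ)/N)]
    have hNZ : ((N:ℕ):ℤ) ≠ 0 := by exact_mod_cast hNpos.ne'
    have hterm : ∀ m : ℤ, (((k:ℝ)/N + m) * N) = ((k + m * N : ℤ) : ℝ) := by
      intro m
      push_cast
      field_simp
    by_cases hdvd : (N:ℤ) ∣ k
    · obtain ⟨d, rfl⟩ := hdvd
      rw [if_pos ⟨d, rfl⟩]
      rw [tsum_eq_single (-d) ?_]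
      · rw [hterm]
        rw [show ((N:ℤ) * d + -d * (N:ℤ) : ℤ) = 0 by ring]
        exact_mod_cast hf0
      · intro m hm
        rw [hterm]
        apply hfint
        intro h0
        have h1 : (d + m) * (N:ℤ) = 0 := by linear_combination h0
        rcases mul_eq_zero.mp h1 with h2 | h2
        · exact hm (by omega)
        · exact hNZ h2
    · rw [if_neg hdvd]
      have hz : ∀ m : ℤ, f (((k:ℝ)/N + m) * N) = 0 := by
        intro m
        rw [hterm]
        apply hfint
        intro h0
        exact hdvd ⟨-m, by linear_combination h0⟩
      simp only [hz, tsum_zero]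
  -- summability of the Fourier coefficients
  have hrw : ∀ n : ℤ, fourierT f ((n:ℝ)/N) = ((N:ℝ):ℂ) * 𝓕 (⇑H) (n:ℝ) := by
    intro n
    rw [show 𝓕 (⇑H) = 𝓕 (fun t : ℝ => f (t * N)) from rfl, hFh]
    field_simp
  have hsumF : Summable (fun n : ℤ => ‖fourierT f ((n:ℝ)/(N:ℝ))‖) := by
    obtain ⟨C, hC⟩ := (SchwartzMap.fourierTransformCLM ℝ H).decay 2 0
    apply Summable.of_norm_bounded_eventually (g := fun n : ℤ => ((N:ℝ) * C) * (1/(n:ℝ)^2))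
      (((summable_one_div_int_pow.mpr one_lt_two).mul_left _))
    filter_upwards [(Set.finite_singleton (0:ℤ)).eventually_cofinite_notMem] with n hn
    have hn0 : n ≠ 0 := hn
    have h1 := hC.2 (n:ℝ)
    rw [norm_iteratedFDeriv_zero] at h1
    simp only [fourierTransformCLM_apply] at h1
    have h2 : ((n:ℝ))^2 * ‖𝓕 (⇑H) (n:ℝ)‖ ≤ C := by
      simpa [Real.norm_eq_abs, sq_abs, SchwartzMap.fourier_coe] using h1
    have hn2 : (0:ℝ) < (n:ℝ)^2 := by
      have : ((n:ℝ)) ≠ 0 := by exact_mod_cast hn0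
      positivity
    calc ‖‖fourierT f ((n:ℝ)/N)‖‖ = (N:ℝ) * ‖𝓕 (⇑H) (n:ℝ)‖ := by
          rw [norm_norm, hrw n, norm_mul]
          norm_num [abs_of_pos hN]
      _ ≤ (N:ℝ) * (C / (n:ℝ)^2) := by
          apply mul_le_mul_of_nonneg_left _ hN.le
          rw [le_div_iff₀ hn2]
          linarith [h2]
      _ = ((N:ℝ) * C) * (1/(n:ℝ)^2) := by ring
  -- notation
  set k : ZMod N → ℤ := fun Q' => (Q'.val : ℤ) - (Q.val : ℤ) with hk
  set w : ZMod N → ℂ := fun Q' => ((‖ψ Q'‖ : ℝ) : ℂ) ^ 2 with hw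
  set G : ℤ → ZMod N → ℂ := fun n Q' => (1/((N:ℝ):ℂ)) * fourierT f ((n:ℝ)/N)
      * Complex.exp (2 * π * Complex.I * n * (((k Q' : ℝ)/N : ℝ) : ℂ)) * w Q' with hG
  set S : ℤ → ℂ := fun n => ∑ Q' : ZMod N,
      Complex.exp (2 * π * Complex.I * n * (Q'.val : ℂ) / N)
        * (‖ψ Q'‖ : ℂ) ^ 2 with hS
  set T : ℤ → ℂ := fun n => fourierT f ((n:ℝ)/N)
      * Complex.exp (-(2 * π * Complex.I * n * ((Q.val : ℕ) : ℂ) / N))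
      * ((1/(N:ℂ)) * S n) with hT
  -- modulus-one phases
  have hexp1 : ∀ r : ℝ, ‖Complex.exp ((r:ℂ) * Complex.I)‖ = 1 :=
    fun r => Complex.norm_exp_ofReal_mul_I r
  have hphase1 : ∀ (n : ℤ) (t : ℂ), t = ((2 * π * n * (t.re) : ℝ) : ℂ) → True := fun _ _ _ => trivial
  -- delta identity
  have hdvd_iff : ∀ Q' : ZMod N, ((N:ℤ) ∣ k Q') ↔ Q' = Q := by
    intro Q'
    rw [← ZMod.intCast_zmod_eq_zero_iff_dvd, hk]
    push_cast
    rw [ZMod.natCast_val, ZMod.natCast_val, ZMod.cast_id, ZMod.cast_id, sub_eq_zero]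
  have hdelta : ∀ Q' : ZMod N,
      (∑' n : ℤ, (1/((N:ℝ):ℂ)) * fourierT f ((n:ℝ)/N)
        * Complex.exp (2 * π * Complex.I * n * (((k Q' : ℝ)/N : ℝ) : ℂ)))
      = (if Q' = Q then 1 else 0) := by
    intro Q'
    rw [keyδ (k Q')]
    simp only [hdvd_iff Q']
  -- summability of each column
  have hGnorm : ∀ (n : ℤ) (Q' : ZMod N),
      ‖G n Q'‖ = (1/(N:ℝ)) * ‖fourierT f ((n:ℝ)/N)‖ * (‖ψ Q'‖)^2 := by
    intro n Q'
    rw [hG]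
    simp only
    rw [norm_mul, norm_mul, norm_mul]
    rw [show (2 * ↑π * Complex.I * (n:ℂ) * (((k Q' : ℝ)/N : ℝ) : ℂ))
        = ((2 * π * n * ((k Q' : ℝ)/N) : ℝ) : ℂ) * Complex.I by push_cast; ring]
    rw [hexp1, mul_one]
    have h1 : ‖(1/((N:ℝ):ℂ))‖ = 1/(N:ℝ) := by
      rw [norm_div, norm_one, Complex.norm_real, Real.norm_eq_abs, abs_of_pos hN]
    have h2 : ‖w Q'‖ = (‖ψ Q'‖)^2 := by
      rw [hw]
      simp only
      rw [norm_pow, Complex.norm_real, Real.norm_eq_abs, _root_.abs_of_nonneg (norm_nonneg _)]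
    rw [h1, h2]
  have hGsummable : ∀ Q' : ZMod N, Summable (fun n : ℤ => G n Q') := by
    intro Q'
    apply Summable.of_norm
    apply Summable.congr ((hsumF.mul_left (1/(N:ℝ))).mul_right ((‖ψ Q'‖)^2))
    intro n
    rw [hGnorm n Q']
  -- inner sums
  have hinner : ∀ Q' : ZMod N, (∑' n : ℤ, G n Q') = (if Q' = Q then 1 else 0) * w Q' := by
    intro Q'
    rw [hG]
    simp only
    rw [tsum_mul_right, hdelta]
  -- row sums equal T
  have hTn : ∀ n : ℤ, (∑ Q' : ZMod N, G n Q') = T n := by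
    intro n
    rw [hT, hS]
    simp only
    rw [Finset.mul_sum, Finset.mul_sum]
    apply Finset.sum_congr rfl
    intro Q' _
    rw [hG, hw]
    simp only
    rw [show Complex.exp (2 * ↑π * Complex.I * (n:ℂ) * (((k Q' : ℝ)/N : ℝ) : ℂ))
        = Complex.exp (-(2 * ↑π * Complex.I * (n:ℂ) * ((Q.val : ℕ) : ℂ) / N))
          * Complex.exp (2 * ↑π * Complex.I * (n:ℂ) * ((Q'.val : ℕ) : ℂ) / N) by
      rw [← Complex.exp_add]
      congr 1
      rw [hk]
      push_cast
      ring]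
    push_cast
    ring
  -- total
  have htotal : (∑' n : ℤ, T n) = ((‖ψ Q‖ : ℝ) : ℂ) ^ 2 := by
    calc (∑' n : ℤ, T n) = ∑' n : ℤ, ∑ Q' : ZMod N, G n Q' := tsum_congr fun n => (hTn n).symm
      _ = ∑ Q' : ZMod N, ∑' n : ℤ, G n Q' := Summable.tsum_finsetSum (fun Q' _ => hGsummable Q')
      _ = ∑ Q' : ZMod N, (if Q' = Q then 1 else 0) * w Q' :=
          Finset.sum_congr rfl fun Q' _ => hinner Q'
      _ = w Q := by
          simp only [ite_mul, one_mul, zero_mul]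
          rw [Finset.sum_ite_eq' Finset.univ Q w]
          simp
      _ = ((‖ψ Q‖ : ℝ) : ℂ) ^ 2 := rfl
  -- norm of T n
  have hTnorm : ∀ n : ℤ, ‖T n‖ = ‖fourierT f ((n:ℝ) / N)‖ *
      ‖(1 / (N : ℂ)) * S n‖ := by
    intro n
    rw [hT]
    simp only
    rw [norm_mul, norm_mul]
    rw [show (-(2 * ↑π * Complex.I * (n:ℂ) * ((Q.val : ℕ) : ℂ) / N))
        = ((-(2 * π * n * (Q.val : ℕ) / N) : ℝ) : ℂ) * Complex.I by push_cast; ring]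
    rw [hexp1, mul_one]
  -- summability of ‖T‖
  have hTsummable : Summable (fun n : ℤ => ‖T n‖) := by
    apply Summable.of_nonneg_of_le (fun n => norm_nonneg _) ?_
      (hsumF.mul_right ((1/(N:ℝ)) * ∑ Q' : ZMod N, (‖ψ Q'‖)^2))
    intro n
    rw [hT]
    simp only
    rw [norm_mul, norm_mul]
    have hb1 : ‖Complex.exp (-(2 * ↑π * Complex.I * (n:ℂ) * ((Q.val : ℕ) : ℂ) / N))‖ = 1 := by
      rw [show (-(2 * ↑π * Complex.I * (n:ℂ) * ((Q.val : ℕ) : ℂ) / N))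
          = ((-(2 * π * n * (Q.val : ℕ) / N) : ℝ) : ℂ) * Complex.I by push_cast; ring]
      exact hexp1 _
    rw [hb1, mul_one]
    apply mul_le_mul_of_nonneg_left _ (norm_nonneg _)
    rw [hS, norm_mul]
    simp only
    have hb2 : ‖(1/(N:ℂ))‖ = 1/(N:ℝ) := by
      rw [norm_div, norm_one]
      simp [abs_of_pos hN]
    rw [hb2]
    apply mul_le_mul_of_nonneg_left _ (by positivity)
    refine (norm_sum_le _ _).trans ?_
    apply Finset.sum_le_sum
    intro Q' _
    rw [norm_mul]
    rw [show (2 * ↑π * Complex.I * (n:ℂ) * ((Q'.val : ℕ) : ℂ) / N)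
        = (((2 * π * n * (Q'.val : ℕ) / N) : ℝ) : ℂ) * Complex.I by push_cast; ring]
    rw [hexp1, one_mul, norm_pow, Complex.norm_real,
      Real.norm_eq_abs, _root_.abs_of_nonneg (norm_nonneg _)]
  -- conclusion
  calc ‖ψ Q‖ ^ 2 = ‖∑' n : ℤ, T n‖ := by
        rw [htotal, norm_pow, Complex.norm_real, Real.norm_eq_abs,
          _root_.abs_of_nonneg (norm_nonneg _)]
    _ ≤ ∑' n : ℤ, ‖T n‖ := norm_tsum_le_tsum_norm hTsummable
    _ = _ := tsum_congr fun n => hTnorm n
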